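/- arXiv:2306.16833 — 2 statements merged into one kernel-verified Lean document; each statement's English description precedes it below -/
import Mathlib

section
/- Let 0 < ε ≤ 1/2, let f : [0,1] → ℝ be continuous, and let u : [0,1] → ℝ be twice continuously differentiable with u(0) = u(1) = 0 and −ε·u''(x) + u'(x) = f(x) for all x ∈ [0,1]. Then (∫₀¹ u(x)² dx)^{1/2} ≤ (2e/(1−ε))·(∫₀¹ f(x)² dx)^{1/2}. -/
open MeasureTheory Set Real

/-! The weight `e^{-x}` makes the convection term coercive. With
`E = e^{-x} (-ε u u' + (1 - ε)/2 · u²)` one has `E' = e^{-x} (f u - ε u'² - (1 - ε)/2 · u²)`,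
so the boundary conditions give `∫ e^{-x} ((1 - ε)/2 · u² + ε u'²) = ∫ e^{-x} f u`. Young's
inequality then bounds the `e^{-x}`-weighted L² norm of `u` by `2/(1 - ε)` times that of `f`, and
the weight lies between `e^{-1}` and `1` on `[0, 1]`. -/

theorem exp_neg_mul_integral_le_integral_exp_neg_mul {a b : ℝ} {g : ℝ → ℝ} (hab : a ≤ b)
    (hg : IntervalIntegrable g volume a b) (hg0 : ∀ x ∈ Icc a b, 0 ≤ g x) :
    exp (-b) * ∫ x in a..b, g x ≤ ∫ x in a..b, exp (-x) * g x := by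
  rw [← intervalIntegral.integral_const_mul]
  refine intervalIntegral.integral_mono_on hab (hg.const_mul _)
    (hg.continuousOn_mul (by fun_prop)) fun x hx => ?_
  gcongr
  exacts [hg0 x hx, hx.2]

theorem integral_exp_neg_mul_le_exp_neg_mul_integral {a b : ℝ} {g : ℝ → ℝ} (hab : a ≤ b)
    (hg : IntervalIntegrable g volume a b) (hg0 : ∀ x ∈ Icc a b, 0 ≤ g x) :
    ∫ x in a..b, exp (-x) * g x ≤ exp (-a) * ∫ x in a..b, g x := by
  rw [← intervalIntegral.integral_const_mul]
  refine intervalIntegral.integral_mono_on hab (hg.continuousOn_mul (by fun_prop))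
    (hg.const_mul _) fun x hx => ?_
  gcongr
  exacts [hg0 x hx, hx.1]

section ConvectionDiffusion

variable {ε a b : ℝ} {f u u' u'' : ℝ → ℝ}

theorem hasDerivAt_exp_neg_mul_energy {x : ℝ} (hu : HasDerivAt u (u' x) x)
    (hu' : HasDerivAt u' (u'' x) x) :
    HasDerivAt (fun y => exp (-y) * (-ε * u y * u' y + (1 - ε) / 2 * u y ^ 2))
      (exp (-x) * ((-ε * u'' x + u' x) * u x - ε * u' x ^ 2 - (1 - ε) / 2 * u x ^ 2)) x := by
  refine ((hasDerivAt_neg x).exp.mul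
    (((hu.const_mul (-ε)).mul hu').add ((hu.pow 2).const_mul ((1 - ε) / 2)))).congr_deriv ?_
  simp only [Pi.mul_apply, Pi.add_apply, Pi.pow_apply]
  ring

variable (hab : a ≤ b) (hf : ContinuousOn f (Icc a b))
    (hu : ∀ x ∈ Icc a b, HasDerivAt u (u' x) x) (hu' : ∀ x ∈ Icc a b, HasDerivAt u' (u'' x) x)
    (hua : u a = 0) (hub : u b = 0) (heq : ∀ x ∈ Icc a b, -ε * u'' x + u' x = f x)
include hab hf hu hu' hua hub heq

theorem integral_exp_neg_mul_energy_eq_zero :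
    ∫ x in a..b, exp (-x) * (f x * u x - ε * u' x ^ 2 - (1 - ε) / 2 * u x ^ 2) = 0 := by
  have hcu := HasDerivAt.continuousOn hu
  have hcu' := HasDerivAt.continuousOn hu'
  rw [intervalIntegral.integral_eq_sub_of_hasDerivAt
    (f := fun y => exp (-y) * (-ε * u y * u' y + (1 - ε) / 2 * u y ^ 2)) _
    (ContinuousOn.intervalIntegrable_of_Icc hab (by fun_prop))]
  · simp [hua, hub]
  · intro x hx
    rw [uIcc_of_le hab] at hx
    simpa only [heq x hx] using hasDerivAt_exp_neg_mul_energy (ε := ε) (hu x hx) (hu' x hx)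

theorem sq_mul_integral_exp_neg_mul_sq_le (hε : 0 ≤ ε) (hε1 : ε < 1) :
    ((1 - ε) / 2) ^ 2 * ∫ x in a..b, exp (-x) * u x ^ 2 ≤ ∫ x in a..b, exp (-x) * f x ^ 2 := by
  have hcu := HasDerivAt.continuousOn hu
  have hcu' := HasDerivAt.continuousOn hu'
  have henergy := integral_exp_neg_mul_energy_eq_zero hab hf hu hu' hua hub heq
  have hc : 0 < (1 - ε) / 2 := by linarith
  set c := (1 - ε) / 2
  -- Young's inequality `c f u ≤ f² / 2 + c² u² / 2`, and the diffusion term has a sign.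
  have young : ∀ x ∈ Icc a b,
      c * (exp (-x) * (f x * u x - ε * u' x ^ 2 - c * u x ^ 2))
        ≤ (exp (-x) * f x ^ 2 - c ^ 2 * (exp (-x) * u x ^ 2)) / 2 := fun x _ => by
    nlinarith [mul_nonneg (exp_pos (-x)).le (sq_nonneg (f x - c * u x)),
      mul_nonneg (exp_pos (-x)).le (mul_nonneg hc.le (mul_nonneg hε (sq_nonneg (u' x))))]
  have hwf : IntervalIntegrable (fun x => exp (-x) * f x ^ 2) volume a b :=
    ContinuousOn.intervalIntegrable_of_Icc hab (by fun_prop)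
  have hwu : IntervalIntegrable (fun x => exp (-x) * u x ^ 2) volume a b :=
    ContinuousOn.intervalIntegrable_of_Icc hab (by fun_prop)
  have := intervalIntegral.integral_mono_on hab
    (ContinuousOn.intervalIntegrable_of_Icc hab (by fun_prop))
    ((hwf.sub (hwu.const_mul (c ^ 2))).div_const 2) young
  rw [intervalIntegral.integral_const_mul, henergy, intervalIntegral.integral_div,
    intervalIntegral.integral_sub hwf (hwu.const_mul _), intervalIntegral.integral_const_mul]
    at this
  linarith

theorem integral_sq_le_exp_mul_integral_sq (hε : 0 ≤ ε) (hε1 : ε < 1) :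
    ∫ x in a..b, u x ^ 2 ≤ exp (b - a) * (2 / (1 - ε)) ^ 2 * ∫ x in a..b, f x ^ 2 := by
  have hcu := HasDerivAt.continuousOn hu
  have hweighted := sq_mul_integral_exp_neg_mul_sq_le hab hf hu hu' hua hub heq hε hε1
  have hu_le := exp_neg_mul_integral_le_integral_exp_neg_mul (g := fun x => u x ^ 2) hab
    (ContinuousOn.intervalIntegrable_of_Icc hab (hcu.pow 2)) fun x _ => sq_nonneg (u x)
  have hf_le := integral_exp_neg_mul_le_exp_neg_mul_integral (g := fun x => f x ^ 2) hab
    (ContinuousOn.intervalIntegrable_of_Icc hab (hf.pow 2)) fun x _ => sq_nonneg (f x)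
  have hc : 0 < (1 - ε) / 2 := by linarith
  calc ∫ x in a..b, u x ^ 2 = exp b * (exp (-b) * ∫ x in a..b, u x ^ 2) := by
        rw [← mul_assoc, ← exp_add, add_neg_cancel, exp_zero, one_mul]
    _ ≤ exp b * (exp (-a) * (∫ x in a..b, f x ^ 2) / ((1 - ε) / 2) ^ 2) := by
        gcongr
        rw [le_div_iff₀ (by positivity)]
        nlinarith
    _ = exp (b - a) * (2 / (1 - ε)) ^ 2 * ∫ x in a..b, f x ^ 2 := by
        rw [exp_sub, exp_neg]
        field_simp

end ConvectionDiffusion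

theorem stmt3_general (ε : ℝ) (hε : 0 < ε) (hε2 : ε ≤ 1 / 2)
    (f u u' u'' : ℝ → ℝ)
    (hf : ContinuousOn f (Icc (0:ℝ) 1))
    (hu : ∀ x ∈ Icc (0:ℝ) 1, HasDerivAt u (u' x) x)
    (hu' : ∀ x ∈ Icc (0:ℝ) 1, HasDerivAt u' (u'' x) x)
    (hu0 : u 0 = 0) (hu1 : u 1 = 0)
    (heq : ∀ x ∈ Icc (0:ℝ) 1, -ε * u'' x + u' x = f x) :
    Real.sqrt (∫ x in (0:ℝ)..1, (u x) ^ 2)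
      ≤ (2 * Real.exp 1 / (1 - ε)) * Real.sqrt (∫ x in (0:ℝ)..1, (f x) ^ 2) := by
  have hε1 : ε < 1 := by linarith
  have hbound := integral_sq_le_exp_mul_integral_sq zero_le_one hf hu hu' hu0 hu1 heq hε.le hε1
  have he : exp 1 ≤ exp 1 ^ 2 := le_self_pow₀ (one_le_exp zero_le_one) two_ne_zero
  have hsq : ∫ x in (0:ℝ)..1, u x ^ 2
      ≤ (2 * exp 1 / (1 - ε)) ^ 2 * ∫ x in (0:ℝ)..1, f x ^ 2 := by
    refine hbound.trans (mul_le_mul_of_nonneg_right ?_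
      (intervalIntegral.integral_nonneg zero_le_one fun x _ => sq_nonneg (f x)))
    rw [sub_zero, mul_comm 2, mul_div_assoc, mul_pow]
    gcongr
  calc Real.sqrt (∫ x in (0:ℝ)..1, u x ^ 2)
      ≤ Real.sqrt ((2 * exp 1 / (1 - ε)) ^ 2 * ∫ x in (0:ℝ)..1, f x ^ 2) :=
        Real.sqrt_le_sqrt hsq
    _ = (2 * exp 1 / (1 - ε)) * Real.sqrt (∫ x in (0:ℝ)..1, f x ^ 2) := by
        rw [Real.sqrt_mul (sq_nonneg _), Real.sqrt_sq (div_nonneg (by positivity) (by linarith))]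

theorem stmt3 (ε : ℝ) (hε : 0 < ε) (hε2 : ε ≤ 1 / 2)
    (f u u' u'' : ℝ → ℝ)
    (hf : ContinuousOn f (Icc (0:ℝ) 1))
    (hu : ∀ x ∈ Icc (0:ℝ) 1, HasDerivAt u (u' x) x)
    (hu' : ∀ x ∈ Icc (0:ℝ) 1, HasDerivAt u' (u'' x) x)
    (hu'' : ContinuousOn u'' (Icc (0:ℝ) 1))
    (hu0 : u 0 = 0) (hu1 : u 1 = 0)
    (heq : ∀ x ∈ Icc (0:ℝ) 1, -ε * u'' x + u' x = f x) :
    Real.sqrt (∫ x in (0:ℝ)..1, (u x) ^ 2)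
      ≤ (2 * Real.exp 1 / (1 - ε)) * Real.sqrt (∫ x in (0:ℝ)..1, (f x) ^ 2) :=
  stmt3_general ε hε hε2 f u u' u'' hf hu hu' hu0 hu1 heq
end

section
/- Let α > 0, 0 < ε ≤ 1, let J ≥ 2 be an even integer, set σ = min(1/2, 2ε·ln J / α), and let the Shishkin mesh points be x_j = j·h for 0 ≤ j ≤ J/2 and x_j = 1 − σ + (j − J/2)·H for J/2 ≤ j ≤ J, where h = 2(1−σ)/J and H = 2σ/J. Then Σ_{j=1}^{J} ∫_{x_{j−1}}^{x_j} ∫_x^{x_j} (1 + ε^{−1}·e^{−α(1−s)/ε}) ds dx ≤ 2·(1 + 2/α)·(ln J)/J. -/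
/-!
On a cell `[a, b]` the inner integral of `1 + g` is `(b - t) + ∫_t^b g ≤ (b - t) + ∫_a^b g`
for `g ≥ 0`, so the cell contributes at most `(b - a) ((b - a) / 2 + ∫_a^b g)`. Every step of
the Shishkin mesh is at most `h ≤ 2 / J`, so the whole sum is at most
`h (1 / 2 + ∫_0^1 ε⁻¹ e^{-α(1-s)/ε} ds) ≤ (2 / J) (1 / 2 + 1 / α)`, and `1 < 2 ln J` for `J ≥ 2`.
-/

open MeasureTheory Set

open Finset in
theorem sum_Icc_one_sub_one_eq_sum_range {M : Type*} [AddCommMonoid M] (F : ℕ → ℕ → M) (n : ℕ) :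
    ∑ j ∈ Icc 1 n, F (j - 1) j = ∑ k ∈ range n, F k (k + 1) := by
  refine sum_nbij' (· - 1) (· + 1) ?_ ?_ ?_ ?_ ?_ <;> intro j hj <;> simp at * <;> grind

theorem integral_integral_one_add_le {g : ℝ → ℝ} (hg : Continuous g) {a b : ℝ} (hab : a ≤ b)
    (hg0 : ∀ s ∈ Icc a b, 0 ≤ g s) :
    ∫ t in a..b, ∫ s in t..b, (1 + g s) ≤ (b - a) * ((b - a) / 2 + ∫ s in a..b, g s) := by
  have hint : ∀ c d, IntervalIntegrable g volume c d := hg.intervalIntegrable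
  have inner : ∀ t, ∫ s in t..b, (1 + g s) = (b - t) + ∫ s in t..b, g s := fun t => by
    simp [intervalIntegral.integral_add intervalIntegrable_const (hint t b)]
  have tail_le : ∀ t ∈ Icc a b, ∫ s in t..b, g s ≤ ∫ s in a..b, g s := fun t ht => by
    rw [← intervalIntegral.integral_add_adjacent_intervals (hint a t) (hint t b)]
    have : 0 ≤ ∫ s in a..t, g s :=
      intervalIntegral.integral_nonneg ht.1 fun u hu => hg0 u ⟨hu.1, hu.2.trans ht.2⟩
    linarith
  have tail_cont : Continuous fun t => ∫ s in t..b, g s := by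
    simp_rw [intervalIntegral.integral_symm b]
    exact (intervalIntegral.continuous_primitive hint b).neg
  calc ∫ t in a..b, ∫ s in t..b, (1 + g s)
      = ∫ t in a..b, ((b - t) + ∫ s in t..b, g s) := by simp_rw [inner]
    _ ≤ ∫ t in a..b, ((b - t) + ∫ s in a..b, g s) :=
        intervalIntegral.integral_mono_on hab
          (((continuous_sub_left b).add tail_cont).intervalIntegrable _ _)
          (((continuous_sub_left b).add continuous_const).intervalIntegrable _ _)
          fun t ht => add_le_add_right (tail_le t ht) _
    _ = (b - a) * ((b - a) / 2 + ∫ s in a..b, g s) := by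
        rw [intervalIntegral.integral_add ((continuous_sub_left b).intervalIntegrable _ _)
          intervalIntegrable_const, intervalIntegral.integral_comp_sub_left (fun t => t)]
        simp
        ring

open Finset in
theorem sum_integral_integral_one_add_le {g : ℝ → ℝ} (hg : Continuous g) (hg0 : ∀ s, 0 ≤ g s)
    {x : ℕ → ℝ} {δ : ℝ} {n : ℕ} (hstep : ∀ k < n, x k ≤ x (k + 1) ∧ x (k + 1) - x k ≤ δ) :
    ∑ k ∈ range n, ∫ t in x k..x (k + 1), ∫ s in t..x (k + 1), (1 + g s)
      ≤ δ * ((x n - x 0) / 2 + ∫ s in x 0..x n, g s) := by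
  calc ∑ k ∈ range n, ∫ t in x k..x (k + 1), ∫ s in t..x (k + 1), (1 + g s)
      ≤ ∑ k ∈ range n, δ * ((x (k + 1) - x k) / 2 + ∫ s in x k..x (k + 1), g s) := by
        refine sum_le_sum fun k hk => ?_
        obtain ⟨hmono, hδ⟩ := hstep k (mem_range.mp hk)
        have : 0 ≤ ∫ s in x k..x (k + 1), g s :=
          intervalIntegral.integral_nonneg hmono fun s _ => hg0 s
        refine (integral_integral_one_add_le hg hmono fun s _ => hg0 s).trans ?_
        gcongr
    _ = δ * ((x n - x 0) / 2 + ∫ s in x 0..x n, g s) := by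
        rw [← mul_sum, sum_add_distrib, ← sum_div, sum_range_sub,
          intervalIntegral.sum_integral_adjacent_intervals fun k _ => hg.intervalIntegrable _ _]

theorem integral_inv_mul_exp_layer {α : ℝ} (hα : α ≠ 0) (ε a b : ℝ) :
    ∫ s in a..b, ε⁻¹ * Real.exp (-α * (1 - s) / ε)
      = α⁻¹ * (Real.exp (-α * (1 - b) / ε) - Real.exp (-α * (1 - a) / ε)) := by
  have hderiv : ∀ s, HasDerivAt (fun u => α⁻¹ * Real.exp (-α * (1 - u) / ε))
      (ε⁻¹ * Real.exp (-α * (1 - s) / ε)) s := fun s =>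
    ((((hasDerivAt_id' s).const_sub 1).const_mul (-α)).div_const ε).exp.const_mul α⁻¹
      |>.congr_deriv (by field_simp)
  rw [intervalIntegral.integral_eq_sub_of_hasDerivAt (fun s _ => hderiv s)
    ((by fun_prop : Continuous _).intervalIntegrable _ _)]
  ring

theorem integral_inv_mul_exp_layer_zero_one_le {α : ℝ} (hα : 0 < α) (ε : ℝ) :
    ∫ s in (0 : ℝ)..1, ε⁻¹ * Real.exp (-α * (1 - s) / ε) ≤ α⁻¹ := by
  rw [integral_inv_mul_exp_layer hα.ne']
  exact mul_le_of_le_one_right (inv_nonneg.mpr hα.le) (by simp [(Real.exp_pos _).le])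

section ShishkinMesh

variable {J : ℕ} {σ h H : ℝ} {x : ℕ → ℝ}

theorem shishkin_step_eq (hx1 : ∀ j ≤ J / 2, x j = j * h)
    (hx2 : ∀ j, J / 2 ≤ j → j ≤ J → x j = 1 - σ + ((j - J / 2 : ℕ) : ℝ) * H)
    {k : ℕ} (hk : k < J) : x (k + 1) - x k = h ∨ x (k + 1) - x k = H := by
  rcases lt_or_ge k (J / 2) with hlt | hge
  · left
    rw [hx1 (k + 1) hlt, hx1 k hlt.le]
    push_cast
    ring
  · right
    rw [hx2 (k + 1) (by omega) hk, hx2 k hge hk.le, Nat.sub_add_comm hge]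
    push_cast
    ring

theorem shishkin_last (hJ : J ≠ 0) (hJe : Even J) (hH : H = 2 * σ / J)
    (hx2 : ∀ j, J / 2 ≤ j → j ≤ J → x j = 1 - σ + ((j - J / 2 : ℕ) : ℝ) * H) : x J = 1 := by
  obtain ⟨m, rfl⟩ := hJe
  have hm : (m : ℝ) ≠ 0 := by exact_mod_cast (by omega : m ≠ 0)
  rw [hx2 _ (by omega) le_rfl, hH, (by omega : m + m - (m + m) / 2 = m)]
  push_cast
  field_simp
  ring

end ShishkinMesh

theorem stmt8_general (α ε : ℝ) (hα : 0 < α) (hε : 0 < ε)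
    (J : ℕ) (hJ : 2 ≤ J) (hJe : Even J)
    (σ h H : ℝ) (x : ℕ → ℝ)
    (hσ : σ = min (1 / 2) (2 * ε * Real.log J / α))
    (hh : h = 2 * (1 - σ) / J) (hH : H = 2 * σ / J)
    (hx1 : ∀ j ≤ J / 2, x j = j * h)
    (hx2 : ∀ j, J / 2 ≤ j → j ≤ J → x j = 1 - σ + ((j - J / 2 : ℕ) : ℝ) * H) :
    ∑ j ∈ Finset.Icc 1 J,
        ∫ t in (x (j - 1))..(x j), ∫ s in t..(x j), (1 + ε⁻¹ * Real.exp (-α * (1 - s) / ε))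
      ≤ 2 * (1 + 2 / α) * Real.log J / J := by
  have hJ0 : (0 : ℝ) < J := by positivity
  have hlogJ : 1 / 2 < Real.log J := by
    have := Real.log_le_log two_pos (by exact_mod_cast hJ : (2 : ℝ) ≤ J)
    linarith [Real.log_two_gt_d9]
  have hσ0 : 0 ≤ σ := hσ ▸ le_min (by norm_num) (by positivity)
  have hσ1 : σ ≤ 1 / 2 := hσ ▸ min_le_left _ _
  have hH0 : 0 ≤ H := hH ▸ by positivity
  have hHh : H ≤ h := by rw [hH, hh]; gcongr; linarith
  have hstep : ∀ k < J, x k ≤ x (k + 1) ∧ x (k + 1) - x k ≤ h := fun k hk => by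
    rcases shishkin_step_eq hx1 hx2 hk with e | e <;> constructor <;> linarith
  have hlayer0 : 0 ≤ ∫ s in (0 : ℝ)..1, ε⁻¹ * Real.exp (-α * (1 - s) / ε) :=
    intervalIntegral.integral_nonneg zero_le_one fun s _ => by positivity
  rw [sum_Icc_one_sub_one_eq_sum_range
    (fun a b => ∫ t in x a..x b, ∫ s in t..x b, (1 + ε⁻¹ * Real.exp (-α * (1 - s) / ε)))]
  calc _ ≤ h * ((x J - x 0) / 2 + ∫ s in x 0..x J, ε⁻¹ * Real.exp (-α * (1 - s) / ε)) :=
        sum_integral_integral_one_add_le (by fun_prop) (fun s => by positivity) hstep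
    _ ≤ 2 / J * (1 / 2 + α⁻¹) := by
        have hx0 : x 0 = 0 := by simpa using hx1 0 (Nat.zero_le _)
        rw [shishkin_last (by omega) hJe hH hx2, hx0, hh]
        gcongr
        · linarith
        · norm_num
        · exact integral_inv_mul_exp_layer_zero_one_le hα ε
    _ ≤ 2 * (1 + 2 / α) * Real.log J / J := by
        rw [show 2 / (J : ℝ) * (1 / 2 + α⁻¹) = (1 + 2 / α) * 1 / J by ring,
          show 2 * (1 + 2 / α) * Real.log J / J = (1 + 2 / α) * (2 * Real.log J) / J by ring]
        gcongr
        linarith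

theorem stmt8 (α ε : ℝ) (hα : 0 < α) (hε : 0 < ε) (hε1 : ε ≤ 1)
    (J : ℕ) (hJ : 2 ≤ J) (hJe : Even J)
    (σ h H : ℝ) (x : ℕ → ℝ)
    (hσ : σ = min (1 / 2) (2 * ε * Real.log J / α))
    (hh : h = 2 * (1 - σ) / J) (hH : H = 2 * σ / J)
    (hx1 : ∀ j ≤ J / 2, x j = j * h)
    (hx2 : ∀ j, J / 2 ≤ j → j ≤ J → x j = 1 - σ + ((j - J / 2 : ℕ) : ℝ) * H) :
    ∑ j ∈ Finset.Icc 1 J,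
        ∫ t in (x (j - 1))..(x j), ∫ s in t..(x j), (1 + ε⁻¹ * Real.exp (-α * (1 - s) / ε))
      ≤ 2 * (1 + 2 / α) * Real.log J / J :=
  stmt8_general α ε hα hε J hJ hJe σ h H x hσ hh hH hx1 hx2
end
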